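/- ($L^{2k}R$ cycles) Let k ≥ 1 and let a,b,c,d ∈ ℕ with 2k ≥ a ≥ b, a ≥ c, a ≥ d ≥ 0. Let C be any configuration picture with C(0,0) = a, C(1,0) = b, C(1,1) = c, C(0,1) = d (as elements of ℤ/(2k+1)ℤ), and start the ant L^{2k}R at position (0,0) with direction (0,−1) (down). Then during the first 4(2k−a) steps the ant's position stays in the block {0,1}×{0,1}, and T_{L^{2k}R}^{4(2k−a)}(C,(0,0),(0,−1)) = (C',(0,0),(0,−1)) where C' agrees with C outside {0,1}×{0,1} and C'(0,0) = 2k, C'(1,0) = b+(2k−a), C'(1,1) = c+(2k−a), C'(0,1) = d+(2k−a). -/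
import Mathlib


/-- Cells of the grid `ℤ²`. -/
abbrev Cell : Type := ℤ × ℤ

/-- The four unit directions of `ℤ²` (the state set `Q`). -/
inductive Dir : Type
  | E | N | W | S
deriving DecidableEq

/-- Rotation by 90° counterclockwise. -/
def Dir.left : Dir → Dir
  | .E => .N | .N => .W | .W => .S | .S => .E

/-- Rotation by 90° clockwise. -/
def Dir.right : Dir → Dir
  | .E => .S | .S => .W | .W => .N | .N => .E

/-- The unit vector of a direction. -/
def Dir.vec : Dir → Cell
  | .E => (1, 0) | .N => (0, 1) | .W => (-1, 0) | .S => (0, -1)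

/-- Configurations: a picture `ℤ² → ℤ/nℤ`, a position and a direction. -/
abbrev Config (n : ℕ) : Type := (Cell → ZMod n) × Cell × Dir

/-- One step of the generalised ant whose rule word over the alphabet `ℤ/nℤ` is
described by `isL : ZMod n → Bool` (`isL a = true` iff the ant turns left on symbol
`a`): the symbol under the ant is increased by `1 (mod n)`, the ant turns left
(counterclockwise) or right (clockwise), and moves one step in its new direction. -/
def antStep (n : ℕ) (isL : ZMod n → Bool) (cfg : Config n) : Config n :=
  let C := cfg.1
  let p := cfg.2.1
  let d' := if isL (C p) then cfg.2.2.left else cfg.2.2.right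
  (Function.update C p (C p + 1), p + d'.vec, d')

/-- The rule word `L^{2k}R`: the ant turns left on symbols `0, …, 2k−1` and right
on symbol `2k` (alphabet `ℤ/(2k+1)ℤ`). -/
def isL2kR (k : ℕ) : ZMod (2 * k + 1) → Bool := fun a => decide (a.val < 2 * k)

/-- The picture `C_{k,i}^{n} : ℤ² → ℤ/(2k+1)ℤ`. -/
def pic (k : ℕ) (i : ZMod (2 * k + 1)) (n : ℕ) : Cell → ZMod (2 * k + 1) := fun q =>
  if q.2 = (n : ℤ) ∧ (q.1 = 1 - (n : ℤ) ∨ q.1 = 2 - (n : ℤ)) then i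
  else if q.1 = 1 - (n : ℤ) ∧ q.2 = (n : ℤ) - 1 then i + 1
  else if q.1 = 2 - (n : ℤ) ∧ q.2 = (n : ℤ) - 1 then i - 1
  else if q.2 = -q.1 - 2 ∧ -(n : ℤ) ≤ q.1 ∧ q.1 ≤ -1 then ((2 * k : ℕ) : ZMod (2 * k + 1))
  else if q.2 = -q.1 + 2 ∧ 2 ≤ q.1 ∧ q.1 ≤ (n : ℤ) + 1 then ((2 * k : ℕ) : ZMod (2 * k + 1)) - 1
  else if q.2 = -q.1 + 1 ∧ 2 ≤ q.1 ∧ q.1 ≤ (n : ℤ) + 1 then ((2 * k : ℕ) : ZMod (2 * k + 1)) - 2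
  else 0

lemma isL_nat (k n : ℕ) (hn : n < 2 * k) : isL2kR k ((n : ZMod (2 * k + 1))) = true := by
  simp [isL2kR, ZMod.val_natCast_of_lt (show n < 2 * k + 1 by omega), hn]

lemma step_left (k : ℕ) (C : Cell → ZMod (2 * k + 1)) (p : Cell) (dd : Dir) (n : ℕ)
    (hn : n < 2 * k) (hC : C p = (n : ZMod (2 * k + 1))) :
    antStep (2 * k + 1) (isL2kR k) (C, p, dd) =
      (Function.update C p ((n + 1 : ℕ) : ZMod (2 * k + 1)), p + dd.left.vec, dd.left) := by
  simp only [antStep, hC, isL_nat k n hn, if_true]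
  norm_cast

lemma cycle (k a b c d : ℕ) (ha : a < 2 * k) (hb : b < 2 * k) (hc : c < 2 * k) (hd : d < 2 * k)
    (C : Cell → ZMod (2 * k + 1))
    (h00 : C (0, 0) = (a : ZMod (2 * k + 1)))
    (h10 : C (1, 0) = (b : ZMod (2 * k + 1)))
    (h11 : C (1, 1) = (c : ZMod (2 * k + 1)))
    (h01 : C (0, 1) = (d : ZMod (2 * k + 1))) :
    ((antStep (2 * k + 1) (isL2kR k))^[1] (C, ((0, 0) : Cell), Dir.S)).2.1 = (1, 0) ∧
    ((antStep (2 * k + 1) (isL2kR k))^[2] (C, ((0, 0) : Cell), Dir.S)).2.1 = (1, 1) ∧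
    ((antStep (2 * k + 1) (isL2kR k))^[3] (C, ((0, 0) : Cell), Dir.S)).2.1 = (0, 1) ∧
    (antStep (2 * k + 1) (isL2kR k))^[4] (C, ((0, 0) : Cell), Dir.S) =
      ((fun q : Cell =>
        if q = ((0, 0) : Cell) then ((a + 1 : ℕ) : ZMod (2 * k + 1))
        else if q = ((1, 0) : Cell) then ((b + 1 : ℕ) : ZMod (2 * k + 1))
        else if q = ((1, 1) : Cell) then ((c + 1 : ℕ) : ZMod (2 * k + 1))
        else if q = ((0, 1) : Cell) then ((d + 1 : ℕ) : ZMod (2 * k + 1))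
        else C q), ((0, 0) : Cell), Dir.S) := by
  have ne10 : ((1, 0) : Cell) ≠ (0, 0) := by norm_num [Prod.ext_iff]
  have ne11a : ((1, 1) : Cell) ≠ (0, 0) := by norm_num [Prod.ext_iff]
  have ne11b : ((1, 1) : Cell) ≠ (1, 0) := by norm_num [Prod.ext_iff]
  have ne01a : ((0, 1) : Cell) ≠ (0, 0) := by norm_num [Prod.ext_iff]
  have ne01b : ((0, 1) : Cell) ≠ (1, 0) := by norm_num [Prod.ext_iff]
  have ne01c : ((0, 1) : Cell) ≠ (1, 1) := by norm_num [Prod.ext_iff]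
  set F := antStep (2 * k + 1) (isL2kR k) with hF
  set X : Config (2 * k + 1) := (C, ((0, 0) : Cell), Dir.S) with hX
  set C1 : Cell → ZMod (2 * k + 1) := Function.update C (0, 0) ((a + 1 : ℕ) : ZMod (2 * k + 1)) with hC1
  have e1 : F^[1] X = (C1, ((1, 0) : Cell), Dir.E) := by
    rw [Function.iterate_one, hF, hX, step_left k C (0, 0) Dir.S a ha h00]
    refine Prod.ext rfl (Prod.ext ?_ rfl)
    norm_num [Dir.left, Dir.vec, Prod.ext_iff]
  set C2 : Cell → ZMod (2 * k + 1) := Function.update C1 (1, 0) ((b + 1 : ℕ) : ZMod (2 * k + 1)) with hC2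
  have e2 : F^[2] X = (C2, ((1, 1) : Cell), Dir.N) := by
    have h : F^[2] X = F (F^[1] X) := Function.iterate_succ_apply' F 1 X
    rw [h, e1, hF, step_left k C1 (1, 0) Dir.E b hb (by rw [hC1, Function.update_of_ne ne10, h10])]
    refine Prod.ext rfl (Prod.ext ?_ rfl)
    norm_num [Dir.left, Dir.vec, Prod.ext_iff]
  set C3 : Cell → ZMod (2 * k + 1) := Function.update C2 (1, 1) ((c + 1 : ℕ) : ZMod (2 * k + 1)) with hC3
  have e3 : F^[3] X = (C3, ((0, 1) : Cell), Dir.W) := by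
    have h : F^[3] X = F (F^[2] X) := Function.iterate_succ_apply' F 2 X
    rw [h, e2, hF, step_left k C2 (1, 1) Dir.N c hc
      (by rw [hC2, Function.update_of_ne ne11b, hC1, Function.update_of_ne ne11a, h11])]
    refine Prod.ext rfl (Prod.ext ?_ rfl)
    norm_num [Dir.left, Dir.vec, Prod.ext_iff]
  set C4 : Cell → ZMod (2 * k + 1) := Function.update C3 (0, 1) ((d + 1 : ℕ) : ZMod (2 * k + 1)) with hC4
  have e4 : F^[4] X = (C4, ((0, 0) : Cell), Dir.S) := by
    have h : F^[4] X = F (F^[3] X) := Function.iterate_succ_apply' F 3 X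
    rw [h, e3, hF, step_left k C3 (0, 1) Dir.W d hd
      (by rw [hC3, Function.update_of_ne ne01c, hC2, Function.update_of_ne ne01b, hC1,
        Function.update_of_ne ne01a, h01])]
    refine Prod.ext rfl (Prod.ext ?_ rfl)
    norm_num [Dir.left, Dir.vec, Prod.ext_iff]
  refine ⟨by rw [e1], by rw [e2], by rw [e3], ?_⟩
  rw [e4]
  refine Prod.ext ?_ rfl
  funext q
  show C4 q = _
  rw [hC4, hC3, hC2, hC1]
  simp only [Function.update_apply]
  by_cases q0 : q = ((0, 0) : Cell)
  · subst q0
    rw [if_neg ne01a.symm, if_neg ne11a.symm, if_neg ne10.symm, if_pos rfl, if_pos rfl]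
  by_cases q1 : q = ((1, 0) : Cell)
  · subst q1
    rw [if_neg ne01b.symm, if_neg ne11b.symm, if_pos rfl, if_neg ne10, if_pos rfl]
  by_cases q2 : q = ((1, 1) : Cell)
  · subst q2
    rw [if_neg ne01c.symm, if_pos rfl, if_neg ne11a, if_neg ne11b, if_pos rfl]
  by_cases q3 : q = ((0, 1) : Cell)
  · subst q3
    rw [if_pos rfl, if_neg ne01a, if_neg ne01b, if_neg ne01c, if_pos rfl]
  · rw [if_neg q3, if_neg q2, if_neg q1, if_neg q0, if_neg q0, if_neg q1, if_neg q2, if_neg q3]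

lemma main_aux (k : ℕ) : ∀ (m a b c d : ℕ) (C : Cell → ZMod (2 * k + 1)),
    a + m = 2 * k → b ≤ a → c ≤ a → d ≤ a →
    C (0, 0) = (a : ZMod (2 * k + 1)) → C (1, 0) = (b : ZMod (2 * k + 1)) →
    C (1, 1) = (c : ZMod (2 * k + 1)) → C (0, 1) = (d : ZMod (2 * k + 1)) →
    (∀ t : ℕ, t < 4 * m →
      (((antStep (2 * k + 1) (isL2kR k))^[t] (C, ((0, 0) : Cell), Dir.S)).2.1.1 = 0 ∨
        ((antStep (2 * k + 1) (isL2kR k))^[t] (C, ((0, 0) : Cell), Dir.S)).2.1.1 = 1) ∧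
      (((antStep (2 * k + 1) (isL2kR k))^[t] (C, ((0, 0) : Cell), Dir.S)).2.1.2 = 0 ∨
        ((antStep (2 * k + 1) (isL2kR k))^[t] (C, ((0, 0) : Cell), Dir.S)).2.1.2 = 1)) ∧
    (antStep (2 * k + 1) (isL2kR k))^[4 * m] (C, ((0, 0) : Cell), Dir.S) =
      ((fun q : Cell =>
        if q = ((0, 0) : Cell) then ((2 * k : ℕ) : ZMod (2 * k + 1))
        else if q = ((1, 0) : Cell) then ((b + m : ℕ) : ZMod (2 * k + 1))
        else if q = ((1, 1) : Cell) then ((c + m : ℕ) : ZMod (2 * k + 1))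
        else if q = ((0, 1) : Cell) then ((d + m : ℕ) : ZMod (2 * k + 1))
        else C q),
       ((0, 0) : Cell), Dir.S) := by
  have ne10 : ((1, 0) : Cell) ≠ (0, 0) := by norm_num [Prod.ext_iff]
  have ne11a : ((1, 1) : Cell) ≠ (0, 0) := by norm_num [Prod.ext_iff]
  have ne11b : ((1, 1) : Cell) ≠ (1, 0) := by norm_num [Prod.ext_iff]
  have ne01a : ((0, 1) : Cell) ≠ (0, 0) := by norm_num [Prod.ext_iff]
  have ne01b : ((0, 1) : Cell) ≠ (1, 0) := by norm_num [Prod.ext_iff]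
  have ne01c : ((0, 1) : Cell) ≠ (1, 1) := by norm_num [Prod.ext_iff]
  intro m
  induction m with
  | zero =>
    intro a b c d C ham hb hc hd h00 h10 h11 h01
    refine ⟨fun t ht => absurd ht (by omega), ?_⟩
    rw [Nat.mul_zero, Function.iterate_zero_apply]
    refine Prod.ext ?_ rfl
    funext q
    simp only []
    by_cases q0 : q = ((0, 0) : Cell)
    · subst q0
      rw [if_pos rfl, h00]
      exact congrArg Nat.cast (by omega)
    by_cases q1 : q = ((1, 0) : Cell)
    · subst q1
      rw [if_neg ne10, if_pos rfl, h10]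
      exact congrArg Nat.cast (by omega)
    by_cases q2 : q = ((1, 1) : Cell)
    · subst q2
      rw [if_neg ne11a, if_neg ne11b, if_pos rfl, h11]
      exact congrArg Nat.cast (by omega)
    by_cases q3 : q = ((0, 1) : Cell)
    · subst q3
      rw [if_neg ne01a, if_neg ne01b, if_neg ne01c, if_pos rfl, h01]
      exact congrArg Nat.cast (by omega)
    · rw [if_neg q0, if_neg q1, if_neg q2, if_neg q3]
  | succ m ih =>
    intro a b c d C ham hb hc hd h00 h10 h11 h01
    have ha : a < 2 * k := by omega
    obtain ⟨p1, p2, p3, p4⟩ := cycle k a b c d ha (by omega) (by omega) (by omega) C h00 h10 h11 h01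
    set F := antStep (2 * k + 1) (isL2kR k) with hF
    set X : Config (2 * k + 1) := (C, ((0, 0) : Cell), Dir.S) with hX
    set C' : Cell → ZMod (2 * k + 1) := (fun q : Cell =>
        if q = ((0, 0) : Cell) then ((a + 1 : ℕ) : ZMod (2 * k + 1))
        else if q = ((1, 0) : Cell) then ((b + 1 : ℕ) : ZMod (2 * k + 1))
        else if q = ((1, 1) : Cell) then ((c + 1 : ℕ) : ZMod (2 * k + 1))
        else if q = ((0, 1) : Cell) then ((d + 1 : ℕ) : ZMod (2 * k + 1))
        else C q) with hC'
    have hv0 : C' (0, 0) = ((a + 1 : ℕ) : ZMod (2 * k + 1)) := by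
      rw [hC']; simp [Prod.ext_iff]
    have hv1 : C' (1, 0) = ((b + 1 : ℕ) : ZMod (2 * k + 1)) := by
      rw [hC']; simp [Prod.ext_iff]
    have hv2 : C' (1, 1) = ((c + 1 : ℕ) : ZMod (2 * k + 1)) := by
      rw [hC']; simp [Prod.ext_iff]
    have hv3 : C' (0, 1) = ((d + 1 : ℕ) : ZMod (2 * k + 1)) := by
      rw [hC']; simp [Prod.ext_iff]
    obtain ⟨ih1, ih2⟩ := ih (a + 1) (b + 1) (c + 1) (d + 1) C' (by omega) (by omega) (by omega)
      (by omega) hv0 hv1 hv2 hv3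
    have key : ∀ s : ℕ, F^[s + 4] X = F^[s] (C', ((0, 0) : Cell), Dir.S) := by
      intro s
      rw [Function.iterate_add_apply, p4]
    constructor
    · intro t ht
      by_cases ht4 : t < 4
      · interval_cases t
        · exact ⟨Or.inl rfl, Or.inl rfl⟩
        · rw [p1]; exact ⟨Or.inr rfl, Or.inl rfl⟩
        · rw [p2]; exact ⟨Or.inr rfl, Or.inr rfl⟩
        · rw [p3]; exact ⟨Or.inl rfl, Or.inr rfl⟩
      · have hts : t = (t - 4) + 4 := by omega
        rw [hts, key]
        exact ih1 (t - 4) (by omega)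
    · have h4 : 4 * (m + 1) = 4 * m + 4 := by ring
      rw [h4, key, ih2]
      refine Prod.ext ?_ rfl
      funext q
      simp only []
      by_cases q0 : q = ((0, 0) : Cell)
      · subst q0; rw [if_pos rfl, if_pos rfl]
      by_cases q1 : q = ((1, 0) : Cell)
      · subst q1
        rw [if_neg ne10, if_pos rfl, if_neg ne10, if_pos rfl]
        exact congrArg Nat.cast (by omega)
      by_cases q2 : q = ((1, 1) : Cell)
      · subst q2
        rw [if_neg ne11a, if_neg ne11b, if_pos rfl, if_neg ne11a, if_neg ne11b, if_pos rfl]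
        exact congrArg Nat.cast (by omega)
      by_cases q3 : q = ((0, 1) : Cell)
      · subst q3
        rw [if_neg ne01a, if_neg ne01b, if_neg ne01c, if_pos rfl,
          if_neg ne01a, if_neg ne01b, if_neg ne01c, if_pos rfl]
        exact congrArg Nat.cast (by omega)
      · rw [if_neg q0, if_neg q1, if_neg q2, if_neg q3, if_neg q0, if_neg q1, if_neg q2, if_neg q3,
          hC']
        simp only
        rw [if_neg q0, if_neg q1, if_neg q2, if_neg q3]

/-- `L^{2k}R` cycles. If `2k ≥ a ≥ b, c, d ≥ 0` and the picture `C`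
has values `a, b, c, d` on the block `{0,1}×{0,1}` as indicated, then starting at
`(0,0)` heading down, the ant stays in the block for the first `4(2k−a)` steps and
after `4(2k−a)` steps it is back at `(0,0)` heading down, the block now carrying the
values `2k, b+(2k−a), c+(2k−a), d+(2k−a)` and the rest of the picture unchanged. -/
theorem l2kr_elementary_cycle (k a b c d : ℕ) (hk : 1 ≤ k)
    (ha : a ≤ 2 * k) (hb : b ≤ a) (hc : c ≤ a) (hd : d ≤ a)
    (C : Cell → ZMod (2 * k + 1))
    (h00 : C (0, 0) = (a : ZMod (2 * k + 1)))
    (h10 : C (1, 0) = (b : ZMod (2 * k + 1)))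
    (h11 : C (1, 1) = (c : ZMod (2 * k + 1)))
    (h01 : C (0, 1) = (d : ZMod (2 * k + 1))) :
    (∀ t : ℕ, t < 4 * (2 * k - a) →
      (((antStep (2 * k + 1) (isL2kR k))^[t] (C, ((0, 0) : Cell), Dir.S)).2.1.1 = 0 ∨
        ((antStep (2 * k + 1) (isL2kR k))^[t] (C, ((0, 0) : Cell), Dir.S)).2.1.1 = 1) ∧
      (((antStep (2 * k + 1) (isL2kR k))^[t] (C, ((0, 0) : Cell), Dir.S)).2.1.2 = 0 ∨
        ((antStep (2 * k + 1) (isL2kR k))^[t] (C, ((0, 0) : Cell), Dir.S)).2.1.2 = 1)) ∧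
    (antStep (2 * k + 1) (isL2kR k))^[4 * (2 * k - a)] (C, ((0, 0) : Cell), Dir.S) =
      ((fun q : Cell =>
        if q = ((0, 0) : Cell) then ((2 * k : ℕ) : ZMod (2 * k + 1))
        else if q = ((1, 0) : Cell) then ((b + (2 * k - a) : ℕ) : ZMod (2 * k + 1))
        else if q = ((1, 1) : Cell) then ((c + (2 * k - a) : ℕ) : ZMod (2 * k + 1))
        else if q = ((0, 1) : Cell) then ((d + (2 * k - a) : ℕ) : ZMod (2 * k + 1))
        else C q),
       ((0, 0) : Cell), Dir.S) := by
  have := main_aux k (2 * k - a) a b c d C (by omega) hb hc hd h00 h10 h11 h01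
  exact this
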